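/- Oracle inequality (basic form): Let ||·||_w be a seminorm on R^{d×d} induced by an inner product ⟨·,·⟩_w, let M ⊆ R^{d×d} be any set of matrices, Σ ∈ R^{d×d}, λ > 0, and let Y: R^{d×d} → R be a functional of the form Y(M) = ||M||_w² − 2⟨Σ, M⟩_w − ⟨R, M⟩ + λ||M||_1 for a fixed error matrix R with ||R||_∞ ≤ λ. If Σ̂ minimizes Y over M, then ||Σ̂ − Σ||_w² ≤ inf_{M ∈ M} { ||M − Σ||_w² + 2λ||M||_1 }. -/

import Mathlib

/-
Adding `⟨Σ, Σ⟩_w` to both sides of `Y(Σ̂) ≤ Y(M)` completes the squares: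
`‖Σ̂ - Σ‖_w² ≤ ‖M - Σ‖_w² + (⟨R, Σ̂⟩ - λ‖Σ̂‖₁) + (λ‖M‖₁ - ⟨R, M⟩)`, and trace duality
`|⟨R, A⟩| ≤ ‖R‖_∞ ‖A‖₁ ≤ λ‖A‖₁` bounds the two brackets by `0` and `2λ‖M‖₁`.

Trace duality is computed in an orthonormal eigenbasis `(vᵢ)` of `AᵀA`:
`tr(RᵀA) = ∑ ⟨Rvᵢ, Avᵢ⟩`, where `‖Avᵢ‖ = σᵢ(A)`, and `‖Rvᵢ‖ ≤ ‖R‖_∞` because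
`RᵀR ≤ ‖R‖_∞²` in the Loewner order.
-/

open Matrix BigOperators

/-- Singular values of a real square matrix. -/
noncomputable def singularValues {d : ℕ} (A : Matrix (Fin d) (Fin d) ℝ) : Fin d → ℝ :=
  fun i => Real.sqrt ((show (Aᵀ * A).IsHermitian by
    simpa using Matrix.isHermitian_conjTranspose_mul_self A).eigenvalues i)

/-- Nuclear norm: sum of singular values. -/
noncomputable def nuclearNorm {d : ℕ} (A : Matrix (Fin d) (Fin d) ℝ) : ℝ :=
  ∑ i, singularValues A i

/-- Spectral norm: largest singular value. -/
noncomputable def matSpectralNorm {d : ℕ} (A : Matrix (Fin d) (Fin d) ℝ) : ℝ :=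
  ⨆ i, singularValues A i

section OracleInequality

variable {E : Type*} [AddCommGroup E] {b : E → E → ℝ}

lemma sub_apply_of_map_add (hadd : ∀ x y z, b (x + y) z = b x z + b y z) (x y z : E) :
    b (x - y) z = b x z - b y z :=
  eq_sub_of_add_eq (by rw [← hadd, sub_add_cancel])

lemma apply_sub_sub_of_symm (hsymm : ∀ x y, b x y = b y x)
    (hadd : ∀ x y z, b (x + y) z = b x z + b y z) (x s : E) :
    b (x - s) (x - s) = b x x - 2 * b s x + b s s := by
  rw [sub_apply_of_map_add hadd, hsymm x, hsymm s, sub_apply_of_map_add hadd,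
    sub_apply_of_map_add hadd, hsymm x s]
  ring

theorem oracle_inequality_of_abs_le (hsymm : ∀ x y, b x y = b y x)
    (hadd : ∀ x y z, b (x + y) z = b x z + b y z) {ℓ pen : E → ℝ} (hℓ : ∀ x, |ℓ x| ≤ pen x)
    {Shat M Sig : E}
    (hmin : b Shat Shat - 2 * b Sig Shat - ℓ Shat + pen Shat ≤
      b M M - 2 * b Sig M - ℓ M + pen M) :
    b (Shat - Sig) (Shat - Sig) ≤ b (M - Sig) (M - Sig) + 2 * pen M := by
  rw [apply_sub_sub_of_symm hsymm hadd, apply_sub_sub_of_symm hsymm hadd]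
  linarith [(abs_le.mp (hℓ Shat)).2, (abs_le.mp (hℓ M)).1]

end OracleInequality

open scoped InnerProductSpace MatrixOrder

namespace Matrix

variable {n : Type*} [Fintype n]

lemma isHermitian_transpose_mul_self (A : Matrix n n ℝ) : (Aᵀ * A).IsHermitian := by
  simpa using isHermitian_conjTranspose_mul_self A

variable [DecidableEq n]

lemma trace_toEuclideanLin {𝕜 : Type*} [RCLike 𝕜] (X : Matrix n n 𝕜) :
    LinearMap.trace 𝕜 _ (toEuclideanLin X) = X.trace := by
  rw [LinearMap.trace_eq_matrix_trace 𝕜 (EuclideanSpace.basisFun n 𝕜).toBasis,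
    toEuclideanLin_eq_toLin_orthonormal, LinearMap.toMatrix_toLin]

lemma inner_toEuclideanLin_transpose_mul (R A : Matrix n n ℝ) (x y : EuclideanSpace ℝ n) :
    ⟪x, toEuclideanLin (Rᵀ * A) y⟫_ℝ = ⟪toEuclideanLin R x, toEuclideanLin A y⟫_ℝ := by
  rw [toLpLin_mul_same, LinearMap.comp_apply, ← conjTranspose_eq_transpose_of_trivial,
    toEuclideanLin_conjTranspose_eq_adjoint, LinearMap.adjoint_inner_right]

lemma norm_toEuclideanLin_eigenvectorBasis (A : Matrix n n ℝ) (i : n) :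
    ‖toEuclideanLin A ((isHermitian_transpose_mul_self A).eigenvectorBasis i)‖ =
      √((isHermitian_transpose_mul_self A).eigenvalues i) := by
  set hH := isHermitian_transpose_mul_self A
  rw [← Real.sqrt_sq (norm_nonneg _), ← real_inner_self_eq_norm_sq,
    ← inner_toEuclideanLin_transpose_mul]
  have hv : toEuclideanLin (Aᵀ * A) (hH.eigenvectorBasis i) =
      hH.eigenvalues i • hH.eigenvectorBasis i :=
    WithLp.ofLp_injective _ (by rw [ofLp_toLpLin, toLin'_apply, hH.mulVec_eigenvectorBasis]; rfl)
  rw [hv, real_inner_smul_right, real_inner_self_eq_norm_sq, hH.eigenvectorBasis.orthonormal.1 i,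
    one_pow, mul_one]

end Matrix

section SingularValues

variable {d : ℕ}

lemma singularValues_eq_sqrt (A : Matrix (Fin d) (Fin d) ℝ) (i : Fin d) :
    singularValues A i = √((isHermitian_transpose_mul_self A).eigenvalues i) :=
  rfl

lemma singularValues_nonneg (A : Matrix (Fin d) (Fin d) ℝ) (i : Fin d) : 0 ≤ singularValues A i :=
  Real.sqrt_nonneg _

lemma nuclearNorm_nonneg (A : Matrix (Fin d) (Fin d) ℝ) : 0 ≤ nuclearNorm A :=
  Finset.sum_nonneg fun i _ => singularValues_nonneg A i

lemma singularValues_le_matSpectralNorm (A : Matrix (Fin d) (Fin d) ℝ) (i : Fin d) :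
    singularValues A i ≤ matSpectralNorm A :=
  le_ciSup (Set.finite_range _).bddAbove i

lemma matSpectralNorm_nonneg (A : Matrix (Fin d) (Fin d) ℝ) : 0 ≤ matSpectralNorm A :=
  Real.iSup_nonneg (singularValues_nonneg A)

lemma transpose_mul_self_le_matSpectralNorm_sq (R : Matrix (Fin d) (Fin d) ℝ) :
    Rᵀ * R ≤ algebraMap ℝ _ (matSpectralNorm R ^ 2) := by
  have hH := isHermitian_transpose_mul_self R
  refine le_algebraMap_of_spectrum_le (ha := hH.isSelfAdjoint) ?_
  rw [hH.spectrum_real_eq_range_eigenvalues]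
  rintro _ ⟨i, rfl⟩
  calc hH.eigenvalues i = singularValues R i ^ 2 :=
        (Real.sq_sqrt (eigenvalues_conjTranspose_mul_self_nonneg R i)).symm
    _ ≤ matSpectralNorm R ^ 2 := by
        gcongr
        · exact singularValues_nonneg R i
        · exact singularValues_le_matSpectralNorm R i

lemma norm_toEuclideanLin_le (R : Matrix (Fin d) (Fin d) ℝ) (x : EuclideanSpace ℝ (Fin d)) :
    ‖toEuclideanLin R x‖ ≤ matSpectralNorm R * ‖x‖ := by
  have hpos := isPositive_toEuclideanLin_iff.mpr (transpose_mul_self_le_matSpectralNorm_sq R)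
  have hquad := hpos.inner_nonneg_right x
  rw [← pow_le_pow_iff_left₀ (norm_nonneg _)
    (mul_nonneg (matSpectralNorm_nonneg R) (norm_nonneg x)) two_ne_zero, mul_pow,
    ← real_inner_self_eq_norm_sq, ← real_inner_self_eq_norm_sq,
    ← inner_toEuclideanLin_transpose_mul]
  simpa [Algebra.algebraMap_eq_smul_one, inner_sub_right, real_inner_smul_right] using hquad

theorem abs_trace_transpose_mul_le (R A : Matrix (Fin d) (Fin d) ℝ) :
    |trace (Rᵀ * A)| ≤ matSpectralNorm R * nuclearNorm A := by
  set b := (isHermitian_transpose_mul_self A).eigenvectorBasis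
  rw [← trace_toEuclideanLin, LinearMap.trace_eq_sum_inner _ b, nuclearNorm, Finset.mul_sum]
  refine (Finset.abs_sum_le_sum_abs _ _).trans (Finset.sum_le_sum fun i _ => ?_)
  rw [inner_toEuclideanLin_transpose_mul, singularValues_eq_sqrt,
    ← norm_toEuclideanLin_eigenvectorBasis]
  calc _ ≤ ‖toEuclideanLin R (b i)‖ * ‖toEuclideanLin A (b i)‖ := abs_real_inner_le_norm _ _
    _ ≤ matSpectralNorm R * ‖toEuclideanLin A (b i)‖ := by
        gcongr
        simpa [b.orthonormal.1 i] using norm_toEuclideanLin_le R (b i)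

end SingularValues

theorem oracle_inequality_basic_general {d : ℕ}
    (wip : Matrix (Fin d) (Fin d) ℝ → Matrix (Fin d) (Fin d) ℝ → ℝ)
    (hsymm : ∀ A B, wip A B = wip B A)
    (hadd : ∀ A B C, wip (A + B) C = wip A C + wip B C)
    (𝓜 : Set (Matrix (Fin d) (Fin d) ℝ))
    (Sig R : Matrix (Fin d) (Fin d) ℝ)
    (lam : ℝ)
    (hR : matSpectralNorm R ≤ lam)
    (Shat : Matrix (Fin d) (Fin d) ℝ)
    (hmin : ∀ M ∈ 𝓜,
      wip Shat Shat - 2 * wip Sig Shat - Matrix.trace (Rᵀ * Shat) + lam * nuclearNorm Shat ≤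
      wip M M - 2 * wip Sig M - Matrix.trace (Rᵀ * M) + lam * nuclearNorm M) :
    ∀ M ∈ 𝓜, wip (Shat - Sig) (Shat - Sig) ≤
      wip (M - Sig) (M - Sig) + 2 * lam * nuclearNorm M := by
  intro M hM
  have htrace (X : Matrix (Fin d) (Fin d) ℝ) : |trace (Rᵀ * X)| ≤ lam * nuclearNorm X :=
    (abs_trace_transpose_mul_le R X).trans (by gcongr; exact nuclearNorm_nonneg X)
  rw [mul_assoc]
  exact oracle_inequality_of_abs_le hsymm hadd htrace (hmin M hM)

/-- Basic oracle inequality: if `Σ̂` minimizes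
`Y(M) = ‖M‖_w² − 2⟨Σ,M⟩_w − ⟨R,M⟩ + λ‖M‖₁` over `𝓜`, where `⟨·,·⟩_w` is a symmetric
positive semi-definite bilinear form and `‖R‖_∞ ≤ λ`, then
`‖Σ̂ − Σ‖_w² ≤ inf_{M ∈ 𝓜} {‖M − Σ‖_w² + 2λ‖M‖₁}`. -/
theorem oracle_inequality_basic {d : ℕ}
    (wip : Matrix (Fin d) (Fin d) ℝ → Matrix (Fin d) (Fin d) ℝ → ℝ)
    (hsymm : ∀ A B, wip A B = wip B A)
    (hadd : ∀ A B C, wip (A + B) C = wip A C + wip B C)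
    (hsmul : ∀ (c : ℝ) A B, wip (c • A) B = c * wip A B)
    (hpos : ∀ A, 0 ≤ wip A A)
    (𝓜 : Set (Matrix (Fin d) (Fin d) ℝ))
    (Sig R : Matrix (Fin d) (Fin d) ℝ)
    (lam : ℝ) (hlam : 0 < lam)
    (hR : matSpectralNorm R ≤ lam)
    (Shat : Matrix (Fin d) (Fin d) ℝ) (hmem : Shat ∈ 𝓜)
    (hmin : ∀ M ∈ 𝓜,
      wip Shat Shat - 2 * wip Sig Shat - Matrix.trace (Rᵀ * Shat) + lam * nuclearNorm Shat ≤
      wip M M - 2 * wip Sig M - Matrix.trace (Rᵀ * M) + lam * nuclearNorm M) :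
    ∀ M ∈ 𝓜, wip (Shat - Sig) (Shat - Sig) ≤
      wip (M - Sig) (M - Sig) + 2 * lam * nuclearNorm M :=
  oracle_inequality_basic_general wip hsymm hadd 𝓜 Sig R lam hR Shat hmin
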